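/- Consider the power-law graphon W(y,y') = min{C(yy')^ν, 1} with 0 < C < 1 and −1/2 < ν < 0. Then for y ∈ (C^{−1/ν}, 1], the weighted degree s(y) = ∫₀¹ W(y,y') dy' equals (C^{−1/ν} y^{−1} ν + C y^ν)/(1 + ν), and consequently y · s(y) → ν C^{−1/ν}/(1+ν) as y → 0⁺ along y > 0, i.e., s(y) is asymptotically proportional to 1/y. -/

import Mathlib

open MeasureTheory Set Filter Real
open scoped Topology

/-- For the power-law graphon `W(y,y') = min{C (y y')^ν, 1}` with
`0 < C < 1` and `−1/2 < ν < 0`, for `y ∈ (C^{−1/ν}, 1]` the weighted degree is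
`s(y) = (C^{−1/ν} y⁻¹ ν + C y^ν)/(1+ν)`, and
`y · (C^{−1/ν} y⁻¹ ν + C y^ν)/(1+ν) → ν C^{−1/ν}/(1+ν)` as `y → 0⁺`,
i.e. `s` is asymptotically proportional to `1/y`. -/
theorem stmt16
    (C ν : ℝ) (hC0 : 0 < C) (hC1 : C < 1) (hν0 : -(1/2) < ν) (hν1 : ν < 0)
    (W : ℝ → ℝ → ℝ)
    (hW : ∀ y y', W y y' = min (C * (y * y') ^ ν) 1)
    (s : ℝ → ℝ)
    (hs : ∀ y, s y = ∫ y' in Icc (0:ℝ) 1, W y y') :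
    (∀ y ∈ Ioc (C ^ (-(1:ℝ)/ν)) (1:ℝ),
        s y = (C ^ (-(1:ℝ)/ν) * y⁻¹ * ν + C * y ^ ν) / (1 + ν))
    ∧ Tendsto (fun y : ℝ =>
          y * ((C ^ (-(1:ℝ)/ν) * y⁻¹ * ν + C * y ^ ν) / (1 + ν)))
        (𝓝[>] 0) (𝓝 (ν * C ^ (-(1:ℝ)/ν) / (1 + ν))) := by
  have hνne : ν ≠ 0 := hν1.ne
  have hν1' : (-1:ℝ) < ν := by linarith
  have h1ν : (0:ℝ) < 1 + ν := by linarith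
  have hCexp : (0:ℝ) < C ^ (-(1:ℝ)/ν) := rpow_pos_of_pos hC0 _
  have hCν : (C ^ (-(1:ℝ)/ν)) ^ ν = C⁻¹ := by
    rw [← Real.rpow_mul hC0.le, div_mul_cancel₀ _ hνne, Real.rpow_neg_one]
  constructor
  · intro y hy
    obtain ⟨hyl, hyu⟩ := hy
    have hy0 : 0 < y := hCexp.trans hyl
    set t : ℝ := C ^ (-(1:ℝ)/ν) * y⁻¹ with ht
    have ht0 : 0 < t := mul_pos hCexp (inv_pos.mpr hy0)
    have hyt : y * t = C ^ (-(1:ℝ)/ν) := by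
      rw [ht]; field_simp
    have ht1 : t < 1 := by
      rw [ht, ← div_eq_mul_inv, div_lt_one hy0]; exact hyl
    set f : ℝ → ℝ := fun y' => min (C * (y * y') ^ ν) 1 with hf
    have hWfun : (fun y' => W y y') = f := funext fun y' => hW y y'
    -- pointwise identification on the two pieces
    have hEq1 : EqOn f (fun _ => (1:ℝ)) (Ioc 0 t) := by
      intro y' hy'
      have hy'0 : 0 < y' := hy'.1
      have h1 : y * y' ≤ C ^ (-(1:ℝ)/ν) := by
        rw [← hyt]; exact mul_le_mul_of_nonneg_left hy'.2 hy0.le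
      have h2 : (C ^ (-(1:ℝ)/ν)) ^ ν ≤ (y * y') ^ ν :=
        rpow_le_rpow_of_nonpos (mul_pos hy0 hy'0) h1 hν1.le
      rw [hCν] at h2
      have h3 : (1:ℝ) ≤ C * (y * y') ^ ν := by
        calc (1:ℝ) = C * C⁻¹ := (mul_inv_cancel₀ hC0.ne').symm
        _ ≤ C * (y * y') ^ ν := mul_le_mul_of_nonneg_left h2 hC0.le
      simp [hf, min_eq_right h3]
    have hEq2 : EqOn f (fun y' => C * y ^ ν * y' ^ ν) (Ioc t 1) := by
      intro y' hy'
      have hy'0 : 0 < y' := ht0.trans hy'.1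
      have h1 : C ^ (-(1:ℝ)/ν) ≤ y * y' := by
        rw [← hyt]; exact mul_le_mul_of_nonneg_left hy'.1.le hy0.le
      have h2 : (y * y') ^ ν ≤ C⁻¹ := by
        rw [← hCν]; exact rpow_le_rpow_of_nonpos hCexp h1 hν1.le
      have h3 : C * (y * y') ^ ν ≤ 1 := by
        calc C * (y * y') ^ ν ≤ C * C⁻¹ := mul_le_mul_of_nonneg_left h2 hC0.le
        _ = 1 := mul_inv_cancel₀ hC0.ne'
      simp only [hf, min_eq_left h3, Real.mul_rpow hy0.le hy'0.le, mul_assoc]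
    -- integrability of the two pieces
    have hInt1 : IntervalIntegrable f volume 0 t := by
      rw [intervalIntegrable_iff_integrableOn_Ioc_of_le ht0.le]
      exact ((integrableOn_const_iff (C := (1:ℝ))).mpr (Or.inr measure_Ioc_lt_top)).congr_fun
        (fun x hx => (hEq1 hx).symm) measurableSet_Ioc
    have hInt2 : IntervalIntegrable f volume t 1 := by
      rw [intervalIntegrable_iff_integrableOn_Ioc_of_le ht1.le]
      have h0 : (0:ℝ) ∉ Set.uIcc t 1 := by
        rw [Set.uIcc_of_le ht1.le]
        exact fun h => ht0.not_ge h.1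
      have : IntervalIntegrable (fun y' : ℝ => C * y ^ ν * y' ^ ν) volume t 1 :=
        (intervalIntegral.intervalIntegrable_rpow (Or.inr h0)).const_mul _
      rw [intervalIntegrable_iff_integrableOn_Ioc_of_le ht1.le] at this
      exact this.congr_fun (fun x hx => (hEq2 hx).symm) measurableSet_Ioc
    have hsplit := intervalIntegral.integral_add_adjacent_intervals hInt1 hInt2
    have hI1 : ∫ y' in (0:ℝ)..t, f y' = t := by
      rw [intervalIntegral.integral_of_le ht0.le,
        setIntegral_congr_fun measurableSet_Ioc hEq1]
      simp [Real.volume_Ioc, ht0.le]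
    have hI2 : ∫ y' in t..(1:ℝ), f y' =
        C * y ^ ν * ((1 - t ^ (ν + 1)) / (ν + 1)) := by
      rw [intervalIntegral.integral_of_le ht1.le,
        setIntegral_congr_fun measurableSet_Ioc hEq2,
        ← intervalIntegral.integral_of_le ht1.le,
        intervalIntegral.integral_const_mul,
        integral_rpow (Or.inl hν1'), Real.one_rpow]
    have hval : s y = t + C * y ^ ν * ((1 - t ^ (ν + 1)) / (ν + 1)) := by
      rw [hs y, integral_Icc_eq_integral_Ioc,
        ← intervalIntegral.integral_of_le zero_le_one, hWfun, ← hsplit, hI1, hI2]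
    have hkey : C * y ^ ν * t ^ (ν + 1) = t := by
      rw [Real.rpow_add ht0, Real.rpow_one]
      have h4 : y ^ ν * t ^ ν = C⁻¹ := by
        rw [← Real.mul_rpow hy0.le ht0.le, hyt, hCν]
      calc C * y ^ ν * (t ^ ν * t) = C * (y ^ ν * t ^ ν) * t := by ring
      _ = t := by rw [h4, mul_inv_cancel₀ hC0.ne', one_mul]
    rw [hval, show C ^ (-(1:ℝ)/ν) * y⁻¹ * ν = t * ν from rfl,
      eq_div_iff h1ν.ne']
    have hne : ν + 1 ≠ 0 := by linarith
    field_simp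
    linear_combination (-(ν + 1)) * hkey
  · have hev : ∀ᶠ y in 𝓝[>] (0:ℝ),
        y * ((C ^ (-(1:ℝ)/ν) * y⁻¹ * ν + C * y ^ ν) / (1 + ν))
          = (C ^ (-(1:ℝ)/ν) * ν + C * y ^ (ν + 1)) / (1 + ν) := by
      filter_upwards [self_mem_nhdsWithin] with y hy
      have hy0 : (0:ℝ) < y := hy
      rw [Real.rpow_add hy0, Real.rpow_one]
      field_simp
    rw [tendsto_congr' hev]
    have h0 : Tendsto (fun y : ℝ => y ^ (ν + 1)) (𝓝[>] 0) (𝓝 0) := by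
      have hc := (Real.continuousAt_rpow_const 0 (ν + 1)
        (Or.inr (by linarith))).tendsto
      rw [Real.zero_rpow (by linarith : ν + 1 ≠ 0)] at hc
      exact hc.mono_left nhdsWithin_le_nhds
    have hlim := ((h0.const_mul C).const_add
      (C ^ (-(1:ℝ)/ν) * ν)).div_const (1 + ν)
    simpa [mul_comm] using hlim
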